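/- Let P₁ ⊂ ℝ^{n₁} and P₂ ⊂ ℝ^{n₂} be convex polytopes containing the origin in their interiors, where ℝⁿ = ℝ^{n₁} ⊕ ℝ^{n₂}. Then for faces F₁ of P₁ and F₂ of P₂: (F₁ ⊕₁ ∅)* = F₁* ⊕∞ P₂°, (∅ ⊕₁ F₂)* = P₁° ⊕∞ F₂*, (F₁ ⊕₁ F₂)* = F₁* ⊕∞ F₂*, (F₁ ⊕∞ P₂)* = F₁* ⊕₁ ∅, (P₁ ⊕∞ F₂)* = ∅ ⊕₁ F₂*, and (F₁ ⊕∞ F₂)* = F₁* ⊕₁ F₂*. Here F₁*, F₂* denote dual faces taken with respect to P₁ ⊂ ℝ^{n₁} and P₂ ⊂ ℝ^{n₂} respectively, and the left-hand duals are taken with respect to P₁ ⊕₁ P₂ or P₁ ⊕∞ P₂ in ℝⁿ. -/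
import Mathlib


open MeasureTheory Set Submodule
open scoped RealInnerProductSpace Pointwise Classical

noncomputable section

abbrev Euc (n : ℕ) := EuclideanSpace ℝ (Fin n)

variable {n : ℕ}

/-- A convex body: a compact convex set with nonempty interior. -/
def IsConvexBody (K : Set (Euc n)) : Prop :=
  Convex ℝ K ∧ IsCompact K ∧ (interior K).Nonempty

/-- The polar of a set. -/
def polarSet (K : Set (Euc n)) : Set (Euc n) := {y | ∀ x ∈ K, ⟪x, y⟫ ≤ 1}

/-- Volume (as a real number). -/
def vol (A : Set (Euc n)) : ℝ := (volume A).toReal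

/-- The volume product of a symmetric convex body. -/
def volProd (K : Set (Euc n)) : ℝ := vol K * vol (polarSet K)

/-- Banach–Mazur distance between symmetric convex bodies. -/
def bmDist (K L : Set (Euc n)) : ℝ :=
  sInf {c : ℝ | 1 ≤ c ∧ ∃ T : (Euc n) ≃ₗ[ℝ] (Euc n), L ⊆ T '' K ∧ T '' K ⊆ c • L}

/-- The dimension of a set: dimension of the linear span of `A - A`. -/
def setDim (A : Set (Euc n)) : ℕ :=
  Module.finrank ℝ (Submodule.span ℝ (A - A) : Submodule ℝ (Euc n))

/-- Dimension with the convention `dim ∅ = -1`. -/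
def edim (A : Set (Euc n)) : ℤ := if A = ∅ then -1 else (setDim A : ℤ)

/-- ℓ1-sum, with the convention `A ⊕₁ ∅ = A`, `∅ ⊕₁ B = B`. -/
def l1Sum (A B : Set (Euc n)) : Set (Euc n) :=
  if A = ∅ then B else if B = ∅ then A else convexHull ℝ (A ∪ B)

/-- The centroid of a set, computed with respect to the Hausdorff measure of dimension
`setDim A` (this is the Lebesgue measure on the affine hull for convex sets). -/
def centroid (A : Set (Euc n)) : Euc n :=
  ((μH[(setDim A : ℝ)] A).toReal)⁻¹ • ∫ x in A, x ∂(μH[(setDim A : ℝ)])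

/-- `F` is a (proper, nonempty) face of `P` cut out by a supporting hyperplane whose normal
vector lies in `V`. -/
def IsFaceIn (V : Submodule ℝ (Euc n)) (P F : Set (Euc n)) : Prop :=
  ∃ (u : Euc n) (b : ℝ), u ∈ V ∧ u ≠ 0 ∧ (∀ x ∈ P, ⟪x, u⟫ ≤ b) ∧
    (∃ x ∈ P, ⟪x, u⟫ = b) ∧ F = {x ∈ P | ⟪x, u⟫ = b} ∧ F ≠ P

/-- `F` is a face of `P` (cut out by a supporting hyperplane). -/
def IsFaceOf (P F : Set (Euc n)) : Prop := IsFaceIn ⊤ P F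

/-- The polar of `K` computed inside the subspace `V`. -/
def polarIn (V : Submodule ℝ (Euc n)) (K : Set (Euc n)) : Set (Euc n) :=
  {y | y ∈ V ∧ ∀ x ∈ K, ⟪x, y⟫ ≤ 1}

/-- The dual face of a face `F` of `P`, computed inside the subspace `V`. -/
def dualFaceIn (V : Submodule ℝ (Euc n)) (P F : Set (Euc n)) : Set (Euc n) :=
  {y ∈ polarIn V P | ∀ x ∈ F, ⟪x, y⟫ = 1}

/-- The dual face `F* = {y ∈ P° : ⟨x,y⟩ = 1 ∀ x ∈ F}`. -/
def dualFace (P F : Set (Euc n)) : Set (Euc n) := dualFaceIn ⊤ P F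

/-- A convex polytope: convex hull of finitely many points. -/
def IsPolytope (P : Set (Euc n)) : Prop := ∃ S : Finset (Euc n), P = convexHull ℝ (S : Set (Euc n))

/-- A flag over `P`: an increasing chain of faces `F⁰ ⊂ F¹ ⊂ ⋯ ⊂ F^{n-1}` with `dim F^k = k`. -/
def IsFlagOf (P : Set (Euc n)) (𝔽 : Fin n → Set (Euc n)) : Prop :=
  (∀ k, IsFaceOf P (𝔽 k)) ∧ (∀ k : Fin n, setDim (𝔽 k) = (k : ℕ)) ∧
  (∀ k l : Fin n, k ≤ l → 𝔽 k ⊆ 𝔽 l)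

/-- The volume of the simplex `Z_𝔽 = conv{0, z_{F⁰}, …, z_{F^{n-1}}}`. -/
def flagVol (Z : Set (Euc n) → Euc n) (𝔽 : Fin n → Set (Euc n)) : ℝ :=
  vol (convexHull ℝ (insert (0 : Euc n) (Set.range fun k => Z (𝔽 k))))

/-- The volume function `V(Z) = Σ_𝔽 |Z_𝔽|`, sum over all flags of `P`. -/
def Vfun (P : Set (Euc n)) (Z : Set (Euc n) → Euc n) : ℝ :=
  ∑ᶠ (𝔽 : Fin n → Set (Euc n)) (_ : IsFlagOf P 𝔽), flagVol Z 𝔽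

/-- The partial volume function: sum over all flags of `P` containing the face `G`. -/
def VfunG (P G : Set (Euc n)) (Z : Set (Euc n) → Euc n) : ℝ :=
  ∑ᶠ (𝔽 : Fin n → Set (Euc n)) (_ : IsFlagOf P 𝔽 ∧ G ∈ Set.range 𝔽), flagVol Z 𝔽

/-- `x_F` is the point of `(t_F • A_F) ∩ ∂K` nearest to `c_F`, where `t_F • A_F` is
tangent to `K`. -/
def TangentXPoint (K AF : Set (Euc n)) (cF : Euc n) (tF : ℝ) (xF : Euc n) : Prop :=
  0 < tF ∧ (tF • AF) ∩ interior K = ∅ ∧ xF ∈ (tF • AF) ∩ frontier K ∧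
  ∀ z ∈ (tF • AF) ∩ frontier K, dist cF xF ≤ dist cF z

/-- The pair of points `x_F, y_F` constructed from `K`, `A_F`, `c_F`. -/
def TangentPointAt (K AF : Set (Euc n)) (cF : Euc n) (tF : ℝ) (xF yF : Euc n) : Prop :=
  TangentXPoint K AF cF tF xF ∧ yF = tF • cF

/-- Conditions (a) and (b) for the affine subspace `A F` at a face `F` of `body`. -/
def GoodAt (body : Set (Euc n)) (A : Set (Euc n) → Set (Euc n)) (c : Set (Euc n) → Euc n)
    (F : Set (Euc n)) : Prop :=
  (∃ S : AffineSubspace ℝ (Euc n), A F = (S : Set (Euc n))) ∧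
  A F ∩ body = {c F} ∧ c F ∈ intrinsicInterior ℝ F ∧
  setDim (A F) + setDim F + 1 = n

/-- Conditions (a), (b), (c) for the family of affine subspaces `A_F` attached to the faces
of `P` and of `P°`. -/
def GoodFamily (P : Set (Euc n)) (A : Set (Euc n) → Set (Euc n)) (c : Set (Euc n) → Euc n) : Prop :=
  (∀ F, IsFaceOf P F → GoodAt P A c F ∧
      ∀ x ∈ A F, ∀ y ∈ A (dualFace P F), ⟪x, y⟫ = 1) ∧
  (∀ G, IsFaceOf (polarSet P) G → GoodAt (polarSet P) A c G)

/-- Hanner polytopes: symmetric segments, closed under ℓ1 and ℓ∞ sums of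
linearly independent summands. -/
inductive IsHanner : Set (Euc n) → Prop
  | seg (x : Euc n) (hx : x ≠ 0) : IsHanner (segment ℝ (-x) x)
  | l1 {A B : Set (Euc n)} (hA : IsHanner A) (hB : IsHanner B)
      (hspan : Submodule.span ℝ A ⊓ Submodule.span ℝ B = ⊥) :
      IsHanner (convexHull ℝ (A ∪ B))
  | linf {A B : Set (Euc n)} (hA : IsHanner A) (hB : IsHanner B)
      (hspan : Submodule.span ℝ A ⊓ Submodule.span ℝ B = ⊥) :
      IsHanner (A + B)

/-- The rules of Definition 4.1 defining `A` on the faces of the ℓ1-sum `H₁ ⊕₁ H₂` from the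
families `A₁, A₂` for `H₁, H₂`. -/
def L1Rules (H₁ H₂ : Set (Euc n)) (A₁ A₂ A : Set (Euc n) → Set (Euc n)) : Prop :=
  (∀ F₁, IsFaceIn (Submodule.span ℝ H₁) H₁ F₁ →
      A F₁ = A₁ F₁ + (Submodule.span ℝ H₂ : Set (Euc n))) ∧
  (∀ F₂, IsFaceIn (Submodule.span ℝ H₂) H₂ F₂ →
      A F₂ = (Submodule.span ℝ H₁ : Set (Euc n)) + A₂ F₂) ∧
  (∀ F₁ F₂, IsFaceIn (Submodule.span ℝ H₁) H₁ F₁ → IsFaceIn (Submodule.span ℝ H₂) H₂ F₂ →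
      A (convexHull ℝ (F₁ ∪ F₂)) =
        ((setDim F₁ + 1 : ℝ) / (setDim F₁ + setDim F₂ + 2)) • A₁ F₁ +
        ((setDim F₂ + 1 : ℝ) / (setDim F₁ + setDim F₂ + 2)) • A₂ F₂)

/-- The rules of Definition 4.1 defining `A` on the faces of the ℓ∞-sum `H₁ ⊕∞ H₂` from the
families `A₁, A₂` for `H₁, H₂`. -/
def LInfRules (H₁ H₂ : Set (Euc n)) (A₁ A₂ A : Set (Euc n) → Set (Euc n)) : Prop :=
  (∀ F₁, IsFaceIn (Submodule.span ℝ H₁) H₁ F₁ → A (F₁ + H₂) = A₁ F₁) ∧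
  (∀ F₂, IsFaceIn (Submodule.span ℝ H₂) H₂ F₂ → A (H₁ + F₂) = A₂ F₂) ∧
  (∀ F₁ F₂, IsFaceIn (Submodule.span ℝ H₁) H₁ F₁ → IsFaceIn (Submodule.span ℝ H₂) H₂ F₂ →
      A (F₁ + F₂) = A₁ F₁ + A₂ F₂ +
        (Submodule.span ℝ
          {(((setDim H₁ : ℝ) - setDim F₁)⁻¹ • centroid F₁ -
            ((setDim H₂ : ℝ) - setDim F₂)⁻¹ • centroid F₂)} : Set (Euc n)))

/-- A Hanner polytope `H` together with its recursively defined family `A` of affine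
subspaces, paired with the (relative) polar Hanner polytope `H'` and its family `A'`. -/
inductive HannerRep :
    Set (Euc n) → (Set (Euc n) → Set (Euc n)) → Set (Euc n) → (Set (Euc n) → Set (Euc n)) → Prop
  | seg (x : Euc n) (hx : x ≠ 0) (A A' : Set (Euc n) → Set (Euc n))
      (hA1 : A {x} = {x}) (hA2 : A {-x} = {-x})
      (hA'1 : A' {(‖x‖ ^ 2)⁻¹ • x} = {(‖x‖ ^ 2)⁻¹ • x})
      (hA'2 : A' {-((‖x‖ ^ 2)⁻¹ • x)} = {-((‖x‖ ^ 2)⁻¹ • x)}) :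
      HannerRep (segment ℝ (-x) x) A
        (segment ℝ (-((‖x‖ ^ 2)⁻¹ • x)) ((‖x‖ ^ 2)⁻¹ • x)) A'
  | l1 {H₁ H₂ H₁' H₂' : Set (Euc n)} {A₁ A₂ A₁' A₂' A A' : Set (Euc n) → Set (Euc n)}
      (h₁ : HannerRep H₁ A₁ H₁' A₁') (h₂ : HannerRep H₂ A₂ H₂' A₂')
      (horth : Submodule.span ℝ (H₂ ∪ H₂') ≤ (Submodule.span ℝ (H₁ ∪ H₁'))ᗮ)
      (hA : L1Rules H₁ H₂ A₁ A₂ A) (hA' : LInfRules H₁' H₂' A₁' A₂' A') :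
      HannerRep (convexHull ℝ (H₁ ∪ H₂)) A (H₁' + H₂') A'
  | linf {H₁ H₂ H₁' H₂' : Set (Euc n)} {A₁ A₂ A₁' A₂' A A' : Set (Euc n) → Set (Euc n)}
      (h₁ : HannerRep H₁ A₁ H₁' A₁') (h₂ : HannerRep H₂ A₂ H₂' A₂')
      (horth : Submodule.span ℝ (H₂ ∪ H₂') ≤ (Submodule.span ℝ (H₁ ∪ H₁'))ᗮ)
      (hA : LInfRules H₁ H₂ A₁ A₂ A) (hA' : L1Rules H₁' H₂' A₁' A₂' A') :
      HannerRep (H₁ + H₂) A (convexHull ℝ (H₁' ∪ H₂')) A'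

/-- The standard symmetric segment `[-e_j, e_j]`. -/
def stdSeg (j : Fin n) : Set (Euc n) :=
  segment ℝ (-(EuclideanSpace.single j (1 : ℝ))) (EuclideanSpace.single j (1 : ℝ))

/-- A standard Hanner polytope `H` (built from the segments `[-e_j, e_j]`) together with its
recursively defined family `A` of affine subspaces, paired with the polar standard Hanner
polytope `H'` and its family `A'`. -/
inductive StdHannerRep :
    Set (Euc n) → (Set (Euc n) → Set (Euc n)) → Set (Euc n) → (Set (Euc n) → Set (Euc n)) → Prop
  | seg (j : Fin n) (A A' : Set (Euc n) → Set (Euc n))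
      (hA1 : A {EuclideanSpace.single j (1 : ℝ)} = {EuclideanSpace.single j (1 : ℝ)})
      (hA2 : A {-EuclideanSpace.single j (1 : ℝ)} = {-EuclideanSpace.single j (1 : ℝ)})
      (hA'1 : A' {EuclideanSpace.single j (1 : ℝ)} = {EuclideanSpace.single j (1 : ℝ)})
      (hA'2 : A' {-EuclideanSpace.single j (1 : ℝ)} = {-EuclideanSpace.single j (1 : ℝ)}) :
      StdHannerRep (stdSeg j) A (stdSeg j) A'
  | l1 {H₁ H₂ H₁' H₂' : Set (Euc n)} {A₁ A₂ A₁' A₂' A A' : Set (Euc n) → Set (Euc n)}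
      (h₁ : StdHannerRep H₁ A₁ H₁' A₁') (h₂ : StdHannerRep H₂ A₂ H₂' A₂')
      (hspan : Submodule.span ℝ (H₁ ∪ H₁') ⊓ Submodule.span ℝ (H₂ ∪ H₂') = ⊥)
      (hA : L1Rules H₁ H₂ A₁ A₂ A) (hA' : LInfRules H₁' H₂' A₁' A₂' A') :
      StdHannerRep (convexHull ℝ (H₁ ∪ H₂)) A (H₁' + H₂') A'
  | linf {H₁ H₂ H₁' H₂' : Set (Euc n)} {A₁ A₂ A₁' A₂' A A' : Set (Euc n) → Set (Euc n)}
      (h₁ : StdHannerRep H₁ A₁ H₁' A₁') (h₂ : StdHannerRep H₂ A₂ H₂' A₂')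
      (hspan : Submodule.span ℝ (H₁ ∪ H₁') ⊓ Submodule.span ℝ (H₂ ∪ H₂') = ⊥)
      (hA : LInfRules H₁ H₂ A₁ A₂ A) (hA' : L1Rules H₁' H₂' A₁' A₂' A') :
      StdHannerRep (H₁ + H₂) A (convexHull ℝ (H₁' ∪ H₂')) A'

/-- `H` is a standard Hanner polytope. -/
def IsStdHanner (H : Set (Euc n)) : Prop :=
  ∃ (A : Set (Euc n) → Set (Euc n)) (H' : Set (Euc n)) (A' : Set (Euc n) → Set (Euc n)),
    StdHannerRep H A H' A'

/-- The unit cube `B∞ⁿ = [-1,1]ⁿ`. -/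
def cube (n : ℕ) : Set (Euc n) := {x | ∀ i, |x i| ≤ 1}

/-- The unit cross-polytope `B₁ⁿ`. -/
def crossPolytope (n : ℕ) : Set (Euc n) := {x | ∑ i, |x i| ≤ 1}

/-- The coordinate subspace `ℝ^(v) = span{e_j : j ∈ supp v}`. -/
def suppSpan (v : Euc n) : Submodule ℝ (Euc n) :=
  Submodule.span ℝ {x : Euc n | ∃ j, v j ≠ 0 ∧ x = EuclideanSpace.single j (1 : ℝ)}

/-- Orthogonal projection of a set onto a subspace. -/
def projSet (V : Submodule ℝ (Euc n)) (K : Set (Euc n)) : Set (Euc n) :=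
  (fun x => (orthogonalProjection V x : Euc n)) '' K

end

section helpers
set_option linter.unusedVariables false
variable {n : ℕ}

private lemma inner_le_on_hull {y : Euc n} {s : Set (Euc n)} {c : ℝ}
    (h : ∀ x ∈ s, ⟪x, y⟫ ≤ c) : ∀ x ∈ convexHull ℝ s, ⟪x, y⟫ ≤ c := by
  intro x hx
  have hlin : IsLinearMap ℝ (fun x : Euc n => ⟪x, y⟫) :=
    ⟨fun a b => inner_add_left a b y, fun r a => real_inner_smul_left a y r⟩
  exact convexHull_min h (convex_halfSpace_le hlin c) hx

private lemma inner_eq_on_hull {y : Euc n} {s : Set (Euc n)} {c : ℝ}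
    (h : ∀ x ∈ s, ⟪x, y⟫ = c) : ∀ x ∈ convexHull ℝ s, ⟪x, y⟫ = c := by
  intro x hx
  have hlin : IsLinearMap ℝ (fun x : Euc n => ⟪x, y⟫) :=
    ⟨fun a b => inner_add_left a b y, fun r a => real_inner_smul_left a y r⟩
  exact convexHull_min h (convex_hyperplane hlin c) hx

private lemma inner_eq_zero_of_le_zero {P : Set (Euc n)}
    (h0 : (0 : Euc n) ∈ intrinsicInterior ℝ P) {y : Euc n}
    (h : ∀ x ∈ P, ⟪x, y⟫ ≤ 0) : ∀ x ∈ P, ⟪x, y⟫ = 0 := by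
  intro x hx
  by_contra hne
  have hlt : ⟪x, y⟫ < 0 := lt_of_le_of_ne (h x hx) hne
  rw [mem_intrinsicInterior] at h0
  obtain ⟨z, hz, hz0⟩ := h0
  have hx' : x ∈ affineSpan ℝ P := subset_affineSpan ℝ P hx
  have h0' : (0 : Euc n) ∈ affineSpan ℝ P := hz0 ▸ z.2
  have hmem : ∀ t : ℝ, (-t) • x ∈ affineSpan ℝ P := by
    intro t
    have := AffineSubspace.smul_vsub_vadd_mem (affineSpan ℝ P) (-t) hx' h0' h0'
    simpa using this
  set f : ℝ → affineSpan ℝ P := fun t => ⟨(-t) • x, hmem t⟩ with hf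
  have hfc : Continuous f := Continuous.subtype_mk (by fun_prop) _
  have hf0 : f 0 = z := Subtype.ext (by simp [hf, hz0])
  have hnb : f ⁻¹' (interior (Subtype.val ⁻¹' P)) ∈ nhds (0 : ℝ) :=
    hfc.continuousAt.preimage_mem_nhds (isOpen_interior.mem_nhds (hf0 ▸ hz))
  rw [Metric.mem_nhds_iff] at hnb
  obtain ⟨ε, hε, hball⟩ := hnb
  have htmem : (ε / 2) ∈ Metric.ball (0 : ℝ) ε := by
    rw [Metric.mem_ball, Real.dist_eq, sub_zero, abs_of_pos (half_pos hε)]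
    linarith
  have h5 : f (ε / 2) ∈ interior (Subtype.val ⁻¹' P) := hball htmem
  have hP : (-(ε / 2)) • x ∈ P :=
    (interior_subset (s := (Subtype.val ⁻¹' P : Set (affineSpan ℝ P))) h5 : _)
  have := h _ hP
  rw [real_inner_smul_left] at this
  nlinarith [half_pos hε]

private lemma inner_orth {W : Submodule ℝ (Euc n)} {a b : Euc n}
    (ha : a ∈ W) (hb : b ∈ Wᗮ) : ⟪a, b⟫ = 0 :=
  (Submodule.mem_orthogonal W b).1 hb a ha

private lemma inner_orth' {W : Submodule ℝ (Euc n)} {a b : Euc n}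
    (ha : a ∈ Wᗮ) (hb : b ∈ W) : ⟪a, b⟫ = 0 := by
  rw [real_inner_comm]; exact inner_orth hb ha

private lemma mem_orthogonal_span' {P : Set (Euc n)} {y : Euc n}
    (h : ∀ x ∈ P, ⟪x, y⟫ = 0) : y ∈ (Submodule.span ℝ P)ᗮ := by
  rw [Submodule.mem_orthogonal]
  intro u hu
  induction hu using Submodule.span_induction with
  | mem x hx => exact h x hx
  | zero => simp
  | add a b _ _ ha hb => rw [inner_add_left, ha, hb, add_zero]
  | smul r a _ ha => rw [real_inner_smul_left, ha, mul_zero]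


private lemma face_subset {V : Submodule ℝ (Euc n)} {P F : Set (Euc n)}
    (h : IsFaceIn V P F) : F ⊆ P := by
  obtain ⟨u, b, -, -, -, -, hF, -⟩ := h
  rw [hF]; exact fun x hx => hx.1

private lemma face_nonempty {V : Submodule ℝ (Euc n)} {P F : Set (Euc n)}
    (h : IsFaceIn V P F) : F.Nonempty := by
  obtain ⟨u, b, -, -, -, ⟨x, hx, hxb⟩, hF, -⟩ := h
  exact ⟨x, by rw [hF]; exact ⟨hx, hxb⟩⟩

private lemma mem_dualFace {P F : Set (Euc n)} {y : Euc n} :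
    y ∈ dualFace P F ↔ (∀ x ∈ P, ⟪x, y⟫ ≤ 1) ∧ ∀ x ∈ F, ⟪x, y⟫ = 1 := by
  simp [dualFace, dualFaceIn, polarIn, Set.mem_setOf_eq]

private lemma mem_dualFaceIn {V : Submodule ℝ (Euc n)} {P F : Set (Euc n)} {y : Euc n} :
    y ∈ dualFaceIn V P F ↔ y ∈ V ∧ (∀ x ∈ P, ⟪x, y⟫ ≤ 1) ∧ ∀ x ∈ F, ⟪x, y⟫ = 1 := by
  simp [dualFaceIn, polarIn, Set.mem_setOf_eq, and_assoc]

private lemma convex_dualFace (P F : Set (Euc n)) : Convex ℝ (dualFace P F) := by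
  intro u hu v hv s t hs ht hst
  rw [mem_dualFace] at hu hv ⊢
  constructor
  · intro x hx
    have h1 := hu.1 x hx
    have h2 := hv.1 x hx
    rw [inner_add_right, real_inner_smul_right, real_inner_smul_right]
    nlinarith
  · intro x hx
    rw [inner_add_right, real_inner_smul_right, real_inner_smul_right,
      hu.2 x hx, hv.2 x hx, mul_one, mul_one, hst]

private lemma aux1 {W₁ W₂ : Submodule ℝ (Euc n)} (h12 : W₁ᗮ = W₂)
    {P₁ P₂ F₁ : Set (Euc n)} (hP₁ : P₁ ⊆ (W₁ : Set (Euc n)))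
    (hP₂ : P₂ ⊆ (W₂ : Set (Euc n))) (hF₁ : F₁ ⊆ (W₁ : Set (Euc n))) :
    dualFace (convexHull ℝ (P₁ ∪ P₂)) F₁ = dualFaceIn W₁ P₁ F₁ + polarIn W₂ P₂ := by
  have horth : ∀ x ∈ W₁, ∀ z ∈ W₂, ⟪x, z⟫ = 0 := fun x hx z hz =>
    inner_orth hx (h12 ▸ hz : z ∈ W₁ᗮ)
  ext y
  rw [mem_dualFace, Set.mem_add]
  constructor
  · rintro ⟨hle, heq⟩
    obtain ⟨y₁, hy₁, y₂, hy₂, hy⟩ := W₁.exists_add_mem_mem_orthogonal y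
    rw [h12] at hy₂
    have key₁ : ∀ x ∈ W₁, ⟪x, y₁⟫ = ⟪x, y⟫ := fun x hx => by
      rw [hy, inner_add_right, horth x hx y₂ hy₂, add_zero]
    have key₂ : ∀ x ∈ W₂, ⟪x, y₂⟫ = ⟪x, y⟫ := fun x hx => by
      rw [hy, inner_add_right, inner_orth' (show x ∈ W₁ᗮ from h12.symm ▸ hx) hy₁, zero_add]
    refine ⟨y₁, ?_, y₂, ?_, hy.symm⟩
    · rw [mem_dualFaceIn]
      refine ⟨hy₁, fun x hx => ?_, fun x hx => ?_⟩
      · rw [key₁ x (hP₁ hx)]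
        exact hle x (subset_convexHull ℝ _ (Or.inl hx))
      · rw [key₁ x (hF₁ hx)]; exact heq x hx
    · exact ⟨hy₂, fun x hx => by
        rw [key₂ x (hP₂ hx)]
        exact hle x (subset_convexHull ℝ _ (Or.inr hx))⟩
  · rintro ⟨y₁, hy₁, y₂, ⟨hy₂W, hy₂le⟩, rfl⟩
    rw [mem_dualFaceIn] at hy₁
    obtain ⟨hy₁W, hy₁le, hy₁eq⟩ := hy₁
    have hy₂W' : y₂ ∈ W₁ᗮ := h12 ▸ hy₂W
    constructor
    · refine inner_le_on_hull ?_
      rintro x (hx | hx)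
      · rw [inner_add_right, inner_orth (hP₁ hx) hy₂W', add_zero]
        exact hy₁le x hx
      · rw [inner_add_right, inner_orth' (show x ∈ W₁ᗮ from h12.symm ▸ hP₂ hx) hy₁W, zero_add]
        exact hy₂le x hx
    · intro x hx
      rw [inner_add_right, inner_orth (hF₁ hx) hy₂W', add_zero]
      exact hy₁eq x hx

private lemma aux3 {W₁ W₂ : Submodule ℝ (Euc n)} (h12 : W₁ᗮ = W₂)
    {P₁ P₂ F₁ F₂ : Set (Euc n)} (hP₁ : P₁ ⊆ (W₁ : Set (Euc n)))
    (hP₂ : P₂ ⊆ (W₂ : Set (Euc n))) (hF₁ : F₁ ⊆ (W₁ : Set (Euc n)))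
    (hF₂ : F₂ ⊆ (W₂ : Set (Euc n))) :
    dualFace (convexHull ℝ (P₁ ∪ P₂)) (convexHull ℝ (F₁ ∪ F₂)) =
      dualFaceIn W₁ P₁ F₁ + dualFaceIn W₂ P₂ F₂ := by
  have horth : ∀ x ∈ W₁, ∀ z ∈ W₂, ⟪x, z⟫ = 0 := fun x hx z hz =>
    inner_orth hx (h12 ▸ hz : z ∈ W₁ᗮ)
  ext y
  rw [mem_dualFace, Set.mem_add]
  constructor
  · rintro ⟨hle, heq⟩
    obtain ⟨y₁, hy₁, y₂, hy₂, hy⟩ := W₁.exists_add_mem_mem_orthogonal y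
    rw [h12] at hy₂
    have key₁ : ∀ x ∈ W₁, ⟪x, y₁⟫ = ⟪x, y⟫ := fun x hx => by
      rw [hy, inner_add_right, horth x hx y₂ hy₂, add_zero]
    have key₂ : ∀ x ∈ W₂, ⟪x, y₂⟫ = ⟪x, y⟫ := fun x hx => by
      rw [hy, inner_add_right, inner_orth' (show x ∈ W₁ᗮ from h12.symm ▸ hx) hy₁, zero_add]
    refine ⟨y₁, ?_, y₂, ?_, hy.symm⟩
    · rw [mem_dualFaceIn]
      refine ⟨hy₁, fun x hx => ?_, fun x hx => ?_⟩
      · rw [key₁ x (hP₁ hx)]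
        exact hle x (subset_convexHull ℝ _ (Or.inl hx))
      · rw [key₁ x (hF₁ hx)]
        exact heq x (subset_convexHull ℝ _ (Or.inl hx))
    · rw [mem_dualFaceIn]
      refine ⟨hy₂, fun x hx => ?_, fun x hx => ?_⟩
      · rw [key₂ x (hP₂ hx)]
        exact hle x (subset_convexHull ℝ _ (Or.inr hx))
      · rw [key₂ x (hF₂ hx)]
        exact heq x (subset_convexHull ℝ _ (Or.inr hx))
  · rintro ⟨y₁, hy₁, y₂, hy₂, rfl⟩
    rw [mem_dualFaceIn] at hy₁ hy₂
    obtain ⟨hy₁W, hy₁le, hy₁eq⟩ := hy₁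
    obtain ⟨hy₂W, hy₂le, hy₂eq⟩ := hy₂
    have hy₂W' : y₂ ∈ W₁ᗮ := h12 ▸ hy₂W
    constructor
    · refine inner_le_on_hull ?_
      rintro x (hx | hx)
      · rw [inner_add_right, inner_orth (hP₁ hx) hy₂W', add_zero]
        exact hy₁le x hx
      · rw [inner_add_right, inner_orth' (show x ∈ W₁ᗮ from h12.symm ▸ hP₂ hx) hy₁W, zero_add]
        exact hy₂le x hx
    · refine inner_eq_on_hull ?_
      rintro x (hx | hx)
      · rw [inner_add_right, inner_orth (hF₁ hx) hy₂W', add_zero]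
        exact hy₁eq x hx
      · rw [inner_add_right, inner_orth' (show x ∈ W₁ᗮ from h12.symm ▸ hF₂ hx) hy₁W, zero_add]
        exact hy₂eq x hx

private lemma aux4 {W₁ W₂ : Submodule ℝ (Euc n)} (h12 : W₁ᗮ = W₂) (h21 : W₂ᗮ = W₁)
    {P₁ P₂ F₁ : Set (Euc n)} (hP₁ : P₁ ⊆ (W₁ : Set (Euc n)))
    (hP₂ : P₂ ⊆ (W₂ : Set (Euc n))) (hs₂ : Submodule.span ℝ P₂ = W₂)
    (h0₂ : (0 : Euc n) ∈ intrinsicInterior ℝ P₂)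
    (hF₁P : F₁ ⊆ P₁) (hF₁ne : F₁.Nonempty) :
    dualFace (P₁ + P₂) (F₁ + P₂) = dualFaceIn W₁ P₁ F₁ := by
  have h0P₂ : (0 : Euc n) ∈ P₂ := intrinsicInterior_subset h0₂
  ext y
  rw [mem_dualFace, mem_dualFaceIn]
  constructor
  · rintro ⟨hle, heq⟩
    obtain ⟨x₀, hx₀⟩ := hF₁ne
    have hx₀eq : ⟪x₀, y⟫ = 1 := by
      have := heq (x₀ + 0) (Set.add_mem_add hx₀ h0P₂)
      rwa [add_zero] at this
    have hz : ∀ x ∈ P₂, ⟪x, y⟫ = 0 := by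
      intro x hx
      have := heq (x₀ + x) (Set.add_mem_add hx₀ hx)
      rw [inner_add_left, hx₀eq] at this
      linarith
    have hyW : y ∈ W₁ := by
      have := mem_orthogonal_span' hz
      rwa [hs₂, h21] at this
    refine ⟨hyW, fun x hx => ?_, fun x hx => ?_⟩
    · have := hle (x + 0) (Set.add_mem_add hx h0P₂)
      rwa [add_zero] at this
    · have := heq (x + 0) (Set.add_mem_add hx h0P₂)
      rwa [add_zero] at this
  · rintro ⟨hyW, hyle, hyeq⟩
    have hz : ∀ x ∈ P₂, ⟪x, y⟫ = 0 := fun x hx =>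
      inner_orth' (show x ∈ W₁ᗮ from h12.symm ▸ hP₂ hx) hyW
    constructor
    · rintro x ⟨x₁, hx₁, x₂, hx₂, rfl⟩
      rw [inner_add_left, hz x₂ hx₂, add_zero]
      exact hyle x₁ hx₁
    · rintro x ⟨x₁, hx₁, x₂, hx₂, rfl⟩
      rw [inner_add_left, hz x₂ hx₂, add_zero]
      exact hyeq x₁ hx₁

private lemma aux6 {W₁ W₂ : Submodule ℝ (Euc n)} (h12 : W₁ᗮ = W₂) (h21 : W₂ᗮ = W₁)
    {P₁ P₂ F₁ F₂ : Set (Euc n)} (hP₁ : P₁ ⊆ (W₁ : Set (Euc n)))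
    (hP₂ : P₂ ⊆ (W₂ : Set (Euc n)))
    (hs₁ : Submodule.span ℝ P₁ = W₁) (hs₂ : Submodule.span ℝ P₂ = W₂)
    (h0₁ : (0 : Euc n) ∈ intrinsicInterior ℝ P₁)
    (h0₂ : (0 : Euc n) ∈ intrinsicInterior ℝ P₂)
    (hF₁P : F₁ ⊆ P₁) (hF₂P : F₂ ⊆ P₂)
    (hF₁ne : F₁.Nonempty) (hF₂ne : F₂.Nonempty) :
    dualFace (P₁ + P₂) (F₁ + F₂) =
      convexHull ℝ (dualFaceIn W₁ P₁ F₁ ∪ dualFaceIn W₂ P₂ F₂) := by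
  have h0P₁ : (0 : Euc n) ∈ P₁ := intrinsicInterior_subset h0₁
  have h0P₂ : (0 : Euc n) ∈ P₂ := intrinsicInterior_subset h0₂
  have hF₁W : F₁ ⊆ (W₁ : Set (Euc n)) := fun x hx => hP₁ (hF₁P hx)
  have hF₂W : F₂ ⊆ (W₂ : Set (Euc n)) := fun x hx => hP₂ (hF₂P hx)
  apply Set.Subset.antisymm
  · -- hard direction
    intro y hy
    rw [mem_dualFace] at hy
    obtain ⟨hle, heq⟩ := hy
    obtain ⟨x₁₀, hx₁₀⟩ := hF₁ne
    obtain ⟨x₂₀, hx₂₀⟩ := hF₂ne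
    set a : ℝ := ⟪x₁₀, y⟫ with ha
    set b : ℝ := ⟪x₂₀, y⟫ with hb
    have hab : a + b = 1 := by
      have := heq (x₁₀ + x₂₀) (Set.add_mem_add hx₁₀ hx₂₀)
      rwa [inner_add_left] at this
    have heqF₁ : ∀ x ∈ F₁, ⟪x, y⟫ = a := by
      intro x hx
      have := heq (x + x₂₀) (Set.add_mem_add hx hx₂₀)
      rw [inner_add_left, ← hb] at this
      linarith
    have heqF₂ : ∀ x ∈ F₂, ⟪x, y⟫ = b := by
      intro x hx
      have := heq (x₁₀ + x) (Set.add_mem_add hx₁₀ hx)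
      rw [inner_add_left, ← ha] at this
      linarith
    have hleP₁ : ∀ x ∈ P₁, ⟪x, y⟫ ≤ a := by
      intro x hx
      have := hle (x + x₂₀) (Set.add_mem_add hx (hF₂P hx₂₀))
      rw [inner_add_left, ← hb] at this
      linarith
    have hleP₂ : ∀ x ∈ P₂, ⟪x, y⟫ ≤ b := by
      intro x hx
      have := hle (x₁₀ + x) (Set.add_mem_add (hF₁P hx₁₀) hx)
      rw [inner_add_left, ← ha] at this
      linarith
    have ha0 : 0 ≤ a := by simpa using hleP₁ 0 h0P₁
    have hb0 : 0 ≤ b := by simpa using hleP₂ 0 h0P₂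
    rcases eq_or_lt_of_le ha0 with ha' | ha'
    · -- a = 0 : y ∈ duals of F₂
      have hz : ∀ x ∈ P₁, ⟪x, y⟫ = 0 :=
        inner_eq_zero_of_le_zero h0₁ (fun x hx => (hleP₁ x hx).trans_eq ha'.symm)
      have hyW : y ∈ W₂ := by
        have := mem_orthogonal_span' hz
        rwa [hs₁, h12] at this
      refine subset_convexHull ℝ _ (Or.inr ?_)
      rw [mem_dualFaceIn]
      exact ⟨hyW, fun x hx => by have := hleP₂ x hx; linarith,
        fun x hx => by have := heqF₂ x hx; linarith⟩
    rcases eq_or_lt_of_le hb0 with hb' | hb'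
    · -- b = 0 : y ∈ duals of F₁
      have hz : ∀ x ∈ P₂, ⟪x, y⟫ = 0 :=
        inner_eq_zero_of_le_zero h0₂ (fun x hx => (hleP₂ x hx).trans_eq hb'.symm)
      have hyW : y ∈ W₁ := by
        have := mem_orthogonal_span' hz
        rwa [hs₂, h21] at this
      refine subset_convexHull ℝ _ (Or.inl ?_)
      rw [mem_dualFaceIn]
      exact ⟨hyW, fun x hx => by have := hleP₁ x hx; linarith,
        fun x hx => by have := heqF₁ x hx; linarith⟩
    · -- 0 < a, 0 < b
      obtain ⟨y₁, hy₁, y₂, hy₂, hysum⟩ := W₁.exists_add_mem_mem_orthogonal y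
      rw [h12] at hy₂
      have key₁ : ∀ x ∈ W₁, ⟪x, y₁⟫ = ⟪x, y⟫ := fun x hx => by
        rw [hysum, inner_add_right,
          inner_orth hx (show y₂ ∈ W₁ᗮ from h12.symm ▸ hy₂), add_zero]
      have key₂ : ∀ x ∈ W₂, ⟪x, y₂⟫ = ⟪x, y⟫ := fun x hx => by
        rw [hysum, inner_add_right,
          inner_orth' (show x ∈ W₁ᗮ from h12.symm ▸ hx) hy₁, zero_add]
      have hu : a⁻¹ • y₁ ∈ dualFaceIn W₁ P₁ F₁ := by
        rw [mem_dualFaceIn]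
        refine ⟨W₁.smul_mem _ hy₁, fun x hx => ?_, fun x hx => ?_⟩
        · rw [real_inner_smul_right, key₁ x (hP₁ hx)]
          have h1 := hleP₁ x hx
          rw [← inv_mul_cancel₀ ha'.ne']
          exact mul_le_mul_of_nonneg_left h1 (inv_pos.2 ha').le
        · rw [real_inner_smul_right, key₁ x (hF₁W hx), heqF₁ x hx,
            inv_mul_cancel₀ ha'.ne']
      have hv : b⁻¹ • y₂ ∈ dualFaceIn W₂ P₂ F₂ := by
        rw [mem_dualFaceIn]
        refine ⟨W₂.smul_mem _ hy₂, fun x hx => ?_, fun x hx => ?_⟩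
        · rw [real_inner_smul_right, key₂ x (hP₂ hx)]
          have h1 := hleP₂ x hx
          rw [← inv_mul_cancel₀ hb'.ne']
          exact mul_le_mul_of_nonneg_left h1 (inv_pos.2 hb').le
        · rw [real_inner_smul_right, key₂ x (hF₂W hx), heqF₂ x hx,
            inv_mul_cancel₀ hb'.ne']
      have hcomb : y = a • (a⁻¹ • y₁) + b • (b⁻¹ • y₂) := by
        rw [smul_smul, smul_smul, mul_inv_cancel₀ ha'.ne', mul_inv_cancel₀ hb'.ne',
          one_smul, one_smul, hysum]
      have hu' : a⁻¹ • y₁ ∈ convexHull ℝ (dualFaceIn W₁ P₁ F₁ ∪ dualFaceIn W₂ P₂ F₂) :=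
        subset_convexHull ℝ _ (Set.mem_union_left _ hu)
      have hv' : b⁻¹ • y₂ ∈ convexHull ℝ (dualFaceIn W₁ P₁ F₁ ∪ dualFaceIn W₂ P₂ F₂) :=
        subset_convexHull ℝ _ (Set.mem_union_right _ hv)
      rw [hcomb]
      exact (convex_convexHull ℝ _) hu' hv' ha'.le hb'.le hab
  · -- easy direction
    refine convexHull_min ?_ (convex_dualFace _ _)
    rintro y (hy | hy) <;> rw [mem_dualFaceIn] at hy <;>
      obtain ⟨hyW, hyle, hyeq⟩ := hy <;> rw [mem_dualFace]
    · have hz₂ : ∀ x ∈ P₂, ⟪x, y⟫ = 0 := fun x hx =>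
        inner_orth' (show x ∈ W₁ᗮ from h12.symm ▸ hP₂ hx) hyW
      constructor
      · rintro x ⟨x₁, hx₁, x₂, hx₂, rfl⟩
        rw [inner_add_left, hz₂ x₂ hx₂, add_zero]
        exact hyle x₁ hx₁
      · rintro x ⟨x₁, hx₁, x₂, hx₂, rfl⟩
        rw [inner_add_left, hz₂ x₂ (hF₂P hx₂), add_zero]
        exact hyeq x₁ hx₁
    · have hz₁ : ∀ x ∈ P₁, ⟪x, y⟫ = 0 := fun x hx =>
        inner_orth (hP₁ hx) (show y ∈ W₁ᗮ from h12.symm ▸ hyW)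
      constructor
      · rintro x ⟨x₁, hx₁, x₂, hx₂, rfl⟩
        rw [inner_add_left, hz₁ x₁ hx₁, zero_add]
        exact hyle x₂ hx₂
      · rintro x ⟨x₁, hx₁, x₂, hx₂, rfl⟩
        rw [inner_add_left, hz₁ x₁ (hF₁P hx₁), zero_add]
        exact hyeq x₂ hx₂

end helpers

/-- **Lemma 3.4.** Dual faces of the ℓ1- and ℓ∞-sums of two polytopes in complementary
subspaces, in terms of the dual faces of the summands (duals of `F₁`, `F₂` are taken
inside `ℝ^{n₁}`, `ℝ^{n₂}` respectively). -/
theorem dual_faces_of_sums (n : ℕ) (V : Submodule ℝ (Euc n)) (P₁ P₂ : Set (Euc n))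
    (h₁ : IsPolytope P₁) (h₂ : IsPolytope P₂)
    (hP₁ : P₁ ⊆ (V : Set (Euc n))) (hP₂ : P₂ ⊆ ((Vᗮ : Submodule ℝ (Euc n)) : Set (Euc n)))
    (hspan₁ : Submodule.span ℝ P₁ = V) (hspan₂ : Submodule.span ℝ P₂ = Vᗮ)
    (h0₁ : (0 : Euc n) ∈ intrinsicInterior ℝ P₁) (h0₂ : (0 : Euc n) ∈ intrinsicInterior ℝ P₂)
    (F₁ F₂ : Set (Euc n)) (hF₁ : IsFaceIn V P₁ F₁) (hF₂ : IsFaceIn Vᗮ P₂ F₂) :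
    dualFace (convexHull ℝ (P₁ ∪ P₂)) F₁ = dualFaceIn V P₁ F₁ + polarIn Vᗮ P₂ ∧
    dualFace (convexHull ℝ (P₁ ∪ P₂)) F₂ = polarIn V P₁ + dualFaceIn Vᗮ P₂ F₂ ∧
    dualFace (convexHull ℝ (P₁ ∪ P₂)) (convexHull ℝ (F₁ ∪ F₂)) =
      dualFaceIn V P₁ F₁ + dualFaceIn Vᗮ P₂ F₂ ∧
    dualFace (P₁ + P₂) (F₁ + P₂) = dualFaceIn V P₁ F₁ ∧
    dualFace (P₁ + P₂) (P₁ + F₂) = dualFaceIn Vᗮ P₂ F₂ ∧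
    dualFace (P₁ + P₂) (F₁ + F₂) =
      convexHull ℝ (dualFaceIn V P₁ F₁ ∪ dualFaceIn Vᗮ P₂ F₂) := by
  have h21 : Vᗮᗮ = V := Submodule.orthogonal_orthogonal V
  have hF₁P := face_subset hF₁
  have hF₂P := face_subset hF₂
  have hF₁ne := face_nonempty hF₁
  have hF₂ne := face_nonempty hF₂
  have hF₁W : F₁ ⊆ (V : Set (Euc n)) := fun x hx => hP₁ (hF₁P hx)
  have hF₂W : F₂ ⊆ ((Vᗮ : Submodule ℝ (Euc n)) : Set (Euc n)) := fun x hx => hP₂ (hF₂P hx)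
  refine ⟨aux1 rfl hP₁ hP₂ hF₁W, ?_, aux3 rfl hP₁ hP₂ hF₁W hF₂W,
    aux4 rfl h21 hP₁ hP₂ hspan₂ h0₂ hF₁P hF₁ne, ?_,
    aux6 rfl h21 hP₁ hP₂ hspan₁ hspan₂ h0₁ h0₂ hF₁P hF₂P hF₁ne hF₂ne⟩
  · rw [Set.union_comm P₁ P₂, add_comm (polarIn V P₁) (dualFaceIn Vᗮ P₂ F₂)]
    exact aux1 h21 hP₂ hP₁ hF₂W
  · rw [add_comm P₁ P₂, add_comm P₁ F₂]
    exact aux4 h21 rfl hP₂ hP₁ hspan₁ h0₁ hF₂P hF₂ne
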